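/- arXiv:1107.5335 — 2 statements merged into one kernel-verified Lean document; each statement's English description precedes it below -/
import Mathlib

section
/- Let n ≥ 1 be an integer and for integers k ≥ j ≥ 1 and real t > 0 define φ(t) = (3/t² + 8n(n+2) - 6nt²)/(2n+1) - [k(k+4n+2) + (1/t²-1)j(j+2)]. Then φ(t) ≤ 0 for all t > 0, with equality if and only if k = j = 1 and t = 1. -/
set_option maxHeartbeats 1600000 in
theorem stmt_4 (n k j : ℕ) (hn : 1 ≤ n) (hj : 1 ≤ j) (hjk : j ≤ k) (t : ℝ) (ht : 0 < t) :
    (3 / t ^ 2 + 8 * n * (n + 2) - 6 * n * t ^ 2) / (2 * n + 1)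
      - ((k : ℝ) * (k + 4 * n + 2) + (1 / t ^ 2 - 1) * (j * (j + 2))) ≤ 0 ∧
    ((3 / t ^ 2 + 8 * n * (n + 2) - 6 * n * t ^ 2) / (2 * n + 1)
      - ((k : ℝ) * (k + 4 * n + 2) + (1 / t ^ 2 - 1) * (j * (j + 2))) = 0
      ↔ k = 1 ∧ j = 1 ∧ t = 1) := by
  have ht2 : (0:ℝ) < t ^ 2 := by positivity
  have hn1 : (1:ℝ) ≤ (n:ℝ) := by exact_mod_cast hn
  have hj1 : (1:ℝ) ≤ (j:ℝ) := by exact_mod_cast hj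
  have hjk1 : (j:ℝ) ≤ (k:ℝ) := by exact_mod_cast hjk
  have hk1 : (1:ℝ) ≤ (k:ℝ) := le_trans hj1 hjk1
  have hden : (0:ℝ) < 2*(n:ℝ)+1 := by linarith
  set L : ℝ := (3 / t ^ 2 + 8 * n * (n + 2) - 6 * n * t ^ 2) / (2 * n + 1)
      - ((k : ℝ) * (k + 4 * n + 2) + (1 / t ^ 2 - 1) * (j * (j + 2))) with hL
  set D : ℝ := (2*(n:ℝ)+1) * ((k:ℝ)*((k:ℝ)+4*n+2) - (j:ℝ)*((j:ℝ)+2)) - 8*n*(n+2) + 12*n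
    with hDdef
  set E : ℝ := (2*(n:ℝ)+1) * ((j:ℝ)*((j:ℝ)+2) - 3) with hEdef
  have hD : (0:ℝ) ≤ D := by
    have h1 : (0:ℝ) ≤ ((k:ℝ) - j) * ((k:ℝ) + j + 2) := by nlinarith
    have h2 : (0:ℝ) ≤ 4*(n:ℝ)*((k:ℝ) - 1) := by nlinarith
    rw [hDdef]; nlinarith
  have hE : (0:ℝ) ≤ E := by
    have h1 : (0:ℝ) ≤ ((j:ℝ) - 1) * ((j:ℝ) + 3) := by nlinarith
    rw [hEdef]; nlinarith
  have key : (2*(n:ℝ)+1) * t^2 * L =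
      -(6*(n:ℝ)*(t^2-1)^2 + D * t^2 + E) := by
    rw [hL, hDdef, hEdef]
    field_simp
    ring
  have hsum : (0:ℝ) ≤ 6*(n:ℝ)*(t^2-1)^2 + D * t^2 + E := by
    have := mul_nonneg hD ht2.le
    nlinarith [sq_nonneg (t^2-1)]
  have hA : (0:ℝ) < (2*(n:ℝ)+1) * t^2 := mul_pos hden ht2
  have hAL : (2*(n:ℝ)+1) * t^2 * L ≤ (2*(n:ℝ)+1) * t^2 * 0 := by
    rw [mul_zero, key]; linarith
  have hL0 : L ≤ 0 := le_of_mul_le_mul_left hAL hA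
  refine ⟨hL0, ?_, ?_⟩
  · intro hEq
    have hzero : 6*(n:ℝ)*(t^2-1)^2 + D * t^2 + E = 0 := by
      have h0 : -(6*(n:ℝ)*(t^2-1)^2 + D * t^2 + E) = 0 := by
        rw [← key, hEq, mul_zero]
      linarith
    have hDt : (0:ℝ) ≤ D * t^2 := mul_nonneg hD ht2.le
    have h6 : 6*(n:ℝ)*(t^2-1)^2 ≤ 6*(n:ℝ)*0 := by rw [mul_zero]; linarith
    have hsq0 : (t^2-1)^2 ≤ 0 := le_of_mul_le_mul_left h6 (by linarith)
    have ht21 : t^2 = 1 := by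
      have h7 : (t^2-1)^2 = 0 := le_antisymm hsq0 (sq_nonneg _)
      have h8 : t^2 - 1 = 0 := sq_eq_zero_iff.1 h7
      linarith
    have htone : t = 1 := by
      have hfac : (t - 1) * (t + 1) = 0 := by nlinarith
      rcases mul_eq_zero.1 hfac with h | h
      · linarith
      · linarith
    have hE0 : E = 0 := by
      have h9 : (0:ℝ) ≤ 6*(n:ℝ)*(t^2-1)^2 := by positivity
      linarith
    have hjj : (j:ℝ)*((j:ℝ)+2) = 3 := by
      have h := hE0
      rw [hEdef] at h
      have := mul_eq_zero.1 h
      rcases this with h | h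
      · linarith
      · linarith
    have hjle : (j:ℝ) ≤ 1 := by nlinarith [mul_nonneg (sub_nonneg.2 hj1) (by linarith : (0:ℝ) ≤ (j:ℝ)+3)]
    have hjeq : j = 1 := by
      have : (j:ℝ) = 1 := le_antisymm hjle hj1
      exact_mod_cast this
    have hD0 : D = 0 := by
      have h9 : (0:ℝ) ≤ 6*(n:ℝ)*(t^2-1)^2 := by positivity
      have h10 : D * t^2 = D := by rw [ht21, mul_one]
      linarith
    have hkk : (k:ℝ)*((k:ℝ)+4*n+2) = 4*(n:ℝ)+3 := by
      rw [hDdef, hjeq] at hD0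
      push_cast at hD0
      have h2 : (2*(n:ℝ)+1) * ((k:ℝ)*((k:ℝ)+4*n+2) - (4*(n:ℝ)+3)) = 0 := by linarith [hD0]; 
      rcases mul_eq_zero.1 h2 with h | h
      · linarith
      · linarith
    have hkle : (k:ℝ) ≤ 1 := by
      nlinarith [mul_nonneg (sub_nonneg.2 hk1) (by linarith : (0:ℝ) ≤ (k:ℝ)+4*n+3)]
    have hkeq : k = 1 := by
      have : (k:ℝ) = 1 := le_antisymm hkle hk1
      exact_mod_cast this
    exact ⟨hkeq, hjeq, htone⟩
  · rintro ⟨hk, hj', ht'⟩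
    subst hk; subst hj'; subst ht'
    have hA : (0:ℝ) < (2*(n:ℝ)+1) * (1:ℝ)^2 := by norm_num; linarith
    have h1 : (2*(n:ℝ)+1) * (1:ℝ)^2 * L = 0 := by
      rw [key, hDdef, hEdef]; push_cast; ring
    exact (mul_eq_zero.1 h1).resolve_left (ne_of_gt hA)
end

section
/- For all integers k ≥ j ≥ 1 and all real t > 0, we have 3/t² + 16 - 4t² ≤ k(k+14) + (1/t²-1)j(j+6), with equality if and only if k = j = 1 and t = 1. -/
theorem stmt_11 (k j : ℕ) (hj : 1 ≤ j) (hjk : j ≤ k) (t : ℝ) (ht : 0 < t) :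
    3 / t ^ 2 + 16 - 4 * t ^ 2 ≤
      (k : ℝ) * (k + 14) + (1 / t ^ 2 - 1) * (j * (j + 6)) ∧
    (3 / t ^ 2 + 16 - 4 * t ^ 2 =
      (k : ℝ) * (k + 14) + (1 / t ^ 2 - 1) * (j * (j + 6)) ↔ k = 1 ∧ j = 1 ∧ t = 1) := by
  have hj' : (1 : ℝ) ≤ (j : ℝ) := by exact_mod_cast hj
  have hjk' : (j : ℝ) ≤ (k : ℝ) := by exact_mod_cast hjk
  have hs : (0 : ℝ) < t ^ 2 := by positivity
  have hA : (0 : ℝ) ≤ ((k : ℝ) - j) * ((k : ℝ) + j + 14) := by nlinarith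
  have hB : (0 : ℝ) ≤ (j : ℝ) * (j + 6) - 7 := by nlinarith
  have key : (k : ℝ) * (k + 14) + (1 / t ^ 2 - 1) * (j * (j + 6)) - (3 / t ^ 2 + 16 - 4 * t ^ 2)
      = ((k : ℝ) - j) * ((k : ℝ) + j + 14) + 8 * ((j : ℝ) - 1)
        + ((j : ℝ) * (j + 6) - 7) / t ^ 2 + 4 * (t ^ 2 - 1) ^ 2 / t ^ 2 := by
    field_simp
    ring
  have h1 : 0 ≤ ((j : ℝ) * (j + 6) - 7) / t ^ 2 := div_nonneg hB hs.le
  have h2 : 0 ≤ 4 * (t ^ 2 - 1) ^ 2 / t ^ 2 := by positivity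
  constructor
  · linarith
  constructor
  · intro heq
    have hD : ((k : ℝ) - j) * ((k : ℝ) + j + 14) + 8 * ((j : ℝ) - 1)
        + ((j : ℝ) * (j + 6) - 7) / t ^ 2 + 4 * (t ^ 2 - 1) ^ 2 / t ^ 2 = 0 := by linarith
    have hJ1 : (j : ℝ) = 1 := by linarith
    have hj1 : j = 1 := by exact_mod_cast hJ1
    have hTd : 4 * (t ^ 2 - 1) ^ 2 / t ^ 2 = 0 := by linarith
    have hT : 4 * (t ^ 2 - 1) ^ 2 = 0 :=
      (div_eq_zero_iff.mp hTd).resolve_right (by positivity)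
    have ht2 : t ^ 2 = 1 := by
      have h4 : (t ^ 2 - 1) ^ 2 = 0 := by linarith
      have := pow_eq_zero_iff (n := 2) (by norm_num) |>.mp h4
      linarith
    have ht1 : t = 1 := by
      have h5 : (t - 1) * (t + 1) = 0 := by ring_nf; linarith
      rcases mul_eq_zero.mp h5 with h | h
      · linarith
      · linarith
    have hA0 : ((k : ℝ) - j) * ((k : ℝ) + j + 14) = 0 := by linarith
    have hk1 : (k : ℝ) = 1 := by
      rcases mul_eq_zero.mp hA0 with h | h
      · linarith
      · linarith
    exact ⟨by exact_mod_cast hk1, hj1, ht1⟩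
  · rintro ⟨rfl, rfl, rfl⟩
    norm_num
end
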